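/- There is an absolute constant C such that for every s ∈ ℂ with Re(s) = 0 and every z ∈ ℂ with |z| ≤ 2π, the series Θ̆_s(z) = Σ_{n≥1} ((1/2)_n / ((1−s)_n · n!)) z^n converges absolutely and satisfies |Θ̆_s(z)| ≤ C·|z|/(1 + |s|). -/

import Mathlib

open Complex

noncomputable section

/-- The `n`-th term of the series defining the regularized Kummer function
`Θ̆_s(z) = Σ_{n≥1} ((1/2)_n / ((1−s)_n · n!)) z^n`, where `(α)_n` is the Pochhammer symbol. -/
def thetaTerm (s z : ℂ) (n : ℕ) : ℂ :=
  (ascPochhammer ℂ n).eval (1/2 : ℂ) * z ^ n /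
    ((ascPochhammer ℂ n).eval (1 - s) * (n.factorial : ℂ))

lemma poch_prod (x : ℂ) : ∀ n : ℕ,
    (ascPochhammer ℂ n).eval x = ∏ k ∈ Finset.range n, (x + k)
  | 0 => by simp
  | n + 1 => by
      rw [ascPochhammer_succ_eval, poch_prod x n, Finset.prod_range_succ]

lemma norm_half_poch (n : ℕ) :
    ‖(ascPochhammer ℂ n).eval (1/2 : ℂ)‖ ≤ n.factorial := by
  rw [poch_prod, norm_prod]
  calc (∏ k ∈ Finset.range n, ‖(1/2 : ℂ) + k‖)
      ≤ ∏ k ∈ Finset.range n, ((k : ℝ) + 1) := by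
        refine Finset.prod_le_prod (fun k _ => norm_nonneg _) (fun k _ => ?_)
        have h := norm_add_le ((1/2 : ℂ)) ((k : ℕ) : ℂ)
        have h2 : ‖((1/2 : ℂ))‖ = 1/2 := by
          rw [show ((1/2 : ℂ)) = (((1/2 : ℝ)) : ℂ) by norm_num, Complex.norm_real]
          norm_num
        rw [h2, Complex.norm_natCast] at h
        linarith
    _ = n.factorial := by
        rw [← Finset.prod_range_add_one_eq_factorial n]
        push_cast
        ring

lemma norm_one_sub_s (s : ℂ) (hs : s.re = 0) : (1 + ‖s‖) / Real.sqrt 2 ≤ ‖1 - s‖ := by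
  have h1 : ‖1 - s‖ ^ 2 = 1 + ‖s‖ ^ 2 := by
    rw [Complex.sq_norm, Complex.sq_norm,
      Complex.normSq_apply, Complex.normSq_apply]
    simp [hs]
  have h2 : (Real.sqrt 2) ^ 2 = 2 := Real.sq_sqrt (by norm_num)
  have h3 : (0:ℝ) < Real.sqrt 2 := Real.sqrt_pos.mpr (by norm_num)
  have h4 : (0:ℝ) ≤ ‖1 - s‖ := norm_nonneg _
  have h5 : (0:ℝ) ≤ ‖s‖ := norm_nonneg _
  rw [div_le_iff₀ h3]
  have h6 : (1 + ‖s‖) ^ 2 ≤ (‖1 - s‖ * Real.sqrt 2) ^ 2 := by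
    nlinarith [sq_nonneg (1 - ‖s‖)]
  calc 1 + ‖s‖ = Real.sqrt ((1 + ‖s‖) ^ 2) := (Real.sqrt_sq (by positivity)).symm
    _ ≤ Real.sqrt ((‖1 - s‖ * Real.sqrt 2) ^ 2) := Real.sqrt_le_sqrt h6
    _ = ‖1 - s‖ * Real.sqrt 2 := Real.sqrt_sq (by positivity)

lemma norm_factor_ge (s : ℂ) (hs : s.re = 0) (k : ℕ) :
    ((k : ℝ) + 1) ≤ ‖1 - s + (k : ℂ)‖ := by
  have : |(1 - s + (k : ℂ)).re| ≤ ‖1 - s + (k : ℂ)‖ := Complex.abs_re_le_norm _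
  have hre : (1 - s + (k : ℂ)).re = 1 + k := by simp [hs]
  rw [hre] at this
  calc ((k : ℝ) + 1) = |1 + (k:ℝ)| := by rw [_root_.abs_of_nonneg (by positivity)]; ring
    _ ≤ _ := this

lemma prod_aux (n : ℕ) : (∏ k ∈ Finset.range n, ((k : ℝ) + 2)) = (n+1).factorial := by
  induction n with
  | zero => simp
  | succ n ih =>
      rw [Finset.prod_range_succ, ih, Nat.factorial_succ (n+1)]
      push_cast
      ring

lemma norm_poch_one_sub_s (s : ℂ) (hs : s.re = 0) (n : ℕ) :
    (1 + ‖s‖) / Real.sqrt 2 * (n+1).factorial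
      ≤ ‖(ascPochhammer ℂ (n+1)).eval (1 - s)‖ := by
  rw [poch_prod, norm_prod, Finset.prod_range_succ']
  have h1 : ((n+1).factorial : ℝ) ≤ ∏ k ∈ Finset.range n, ‖1 - s + (↑(k+1) : ℂ)‖ := by
    rw [← prod_aux n]
    refine Finset.prod_le_prod (fun k _ => by positivity) (fun k _ => ?_)
    have := norm_factor_ge s hs (k+1)
    push_cast at this ⊢
    linarith
  have h2 : (1 + ‖s‖) / Real.sqrt 2 ≤ ‖1 - s + ((0:ℕ) : ℂ)‖ := by
    simpa using norm_one_sub_s s hs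
  have hnn : (0:ℝ) ≤ (1 + ‖s‖) / Real.sqrt 2 := by positivity
  calc (1 + ‖s‖) / Real.sqrt 2 * (n+1).factorial
      ≤ (∏ k ∈ Finset.range n, ‖1 - s + (↑(k+1) : ℂ)‖) * ‖1 - s + ((0:ℕ) : ℂ)‖ := by
        rw [mul_comm ((1 + ‖s‖) / Real.sqrt 2) _]
        exact mul_le_mul h1 h2 hnn (Finset.prod_nonneg fun k _ => norm_nonneg _)
    _ = _ := by norm_cast

lemma term_bound (s z : ℂ) (hs : s.re = 0) (hz : ‖z‖ ≤ 2 * Real.pi) (n : ℕ) :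
    ‖thetaTerm s z (n+1)‖ ≤
      Real.sqrt 2 * ‖z‖ / (1 + ‖s‖) * ((2 * Real.pi) ^ n / n.factorial) := by
  have hs1 : (0:ℝ) < 1 + ‖s‖ := by positivity
  have hsqrt : (0:ℝ) < Real.sqrt 2 := Real.sqrt_pos.mpr (by norm_num)
  set P := ‖(ascPochhammer ℂ (n+1)).eval (1/2 : ℂ)‖ with hP
  set B := ‖(ascPochhammer ℂ (n+1)).eval (1 - s)‖ with hB
  have hBlb := norm_poch_one_sub_s s hs n
  have hBpos : (0:ℝ) < B := lt_of_lt_of_le (by positivity) hBlb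
  have hfac : (0:ℝ) < ((n+1).factorial : ℝ) := by positivity
  have heq : ‖thetaTerm s z (n+1)‖ = P / B * (‖z‖ ^ (n+1) / ((n+1).factorial : ℝ)) := by
    rw [thetaTerm, norm_div, norm_mul, norm_mul, norm_pow, Complex.norm_natCast,
      div_mul_div_comm]
  rw [heq]
  have hb1 : P / B ≤ Real.sqrt 2 / (1 + ‖s‖) := by
    have h1 : P ≤ ((n+1).factorial : ℝ) := norm_half_poch (n+1)
    have hfac0 : (0:ℝ) < (1 + ‖s‖) / Real.sqrt 2 * (n+1).factorial := by positivity
    calc P / B ≤ ((n+1).factorial : ℝ) / ((1 + ‖s‖) / Real.sqrt 2 * (n+1).factorial) :=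
          div_le_div₀ (by positivity) h1 hfac0 hBlb
      _ = Real.sqrt 2 / (1 + ‖s‖) := by
          field_simp [hs1.ne', hsqrt.ne', hfac.ne']
  have hb2 : ‖z‖ ^ (n+1) / ((n+1).factorial : ℝ) ≤ ‖z‖ * (2 * Real.pi) ^ n / n.factorial := by
    have hz0 : (0:ℝ) ≤ ‖z‖ := norm_nonneg _
    have h1 : ‖z‖ ^ (n+1) ≤ ‖z‖ * (2 * Real.pi) ^ n := by
      rw [pow_succ']
      exact mul_le_mul_of_nonneg_left (pow_le_pow_left₀ hz0 hz n) hz0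
    have h2 : (n.factorial : ℝ) ≤ ((n+1).factorial : ℝ) := by
      exact_mod_cast Nat.factorial_le (Nat.le_succ n)
    exact div_le_div₀ (by positivity) h1 (by positivity) h2
  calc P / B * (‖z‖ ^ (n+1) / ((n+1).factorial : ℝ))
      ≤ Real.sqrt 2 / (1 + ‖s‖) * (‖z‖ * (2 * Real.pi) ^ n / n.factorial) := by
        exact mul_le_mul hb1 hb2 (by positivity) (by positivity)
    _ = Real.sqrt 2 * ‖z‖ / (1 + ‖s‖) * ((2 * Real.pi) ^ n / n.factorial) := by
        ring

/-- There is an absolute constant `C` such that for every `s` with `Re s = 0` and every `z`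
with `|z| ≤ 2π`, the series `Θ̆_s(z)` converges absolutely and `|Θ̆_s(z)| ≤ C|z|/(1+|s|)`. -/
theorem mean_value_stmt0 :
    ∃ C : ℝ, ∀ s z : ℂ, s.re = 0 → ‖z‖ ≤ 2 * Real.pi →
      Summable (fun n : ℕ => ‖thetaTerm s z (n + 1)‖) ∧
      ‖∑' n : ℕ, thetaTerm s z (n + 1)‖ ≤ C * ‖z‖ / (1 + ‖s‖) := by
  refine ⟨Real.sqrt 2 * ∑' n : ℕ, (2 * Real.pi) ^ n / n.factorial, fun s z hs hz => ?_⟩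
  have hsum0 : Summable (fun n : ℕ => ((2 * Real.pi) ^ n / n.factorial : ℝ)) :=
    Real.summable_pow_div_factorial _
  have hsum1 : Summable (fun n : ℕ =>
      Real.sqrt 2 * ‖z‖ / (1 + ‖s‖) * ((2 * Real.pi) ^ n / n.factorial)) :=
    hsum0.mul_left _
  have hb := term_bound s z hs hz
  have hsum : Summable (fun n : ℕ => ‖thetaTerm s z (n + 1)‖) :=
    Summable.of_nonneg_of_le (fun n => norm_nonneg _) hb hsum1
  refine ⟨hsum, ?_⟩
  have hs1 : (0:ℝ) < 1 + ‖s‖ := by positivity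
  calc ‖∑' n : ℕ, thetaTerm s z (n + 1)‖
      ≤ ∑' n : ℕ, ‖thetaTerm s z (n + 1)‖ := norm_tsum_le_tsum_norm hsum
    _ ≤ ∑' n : ℕ, Real.sqrt 2 * ‖z‖ / (1 + ‖s‖) * ((2 * Real.pi) ^ n / n.factorial) :=
        Summable.tsum_le_tsum hb hsum hsum1
    _ = Real.sqrt 2 * ‖z‖ / (1 + ‖s‖) * ∑' n : ℕ, ((2 * Real.pi) ^ n / n.factorial) :=
        tsum_mul_left
    _ = (Real.sqrt 2 * ∑' n : ℕ, (2 * Real.pi) ^ n / n.factorial) * ‖z‖ / (1 + ‖s‖) := by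
        ring

end
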